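/- arXiv:2403.15301 — 2 statements merged into one kernel-verified Lean document; each statement's English description precedes it below -/
import Mathlib

section
/- The SF-FSA-VI operator F is a contraction: for all w, w' : U → E → ℝ, ‖F w − F w'‖∞ ≤ γ · ‖w − w'‖∞, where ‖w‖∞ = max over (u, j) ∈ U × E of |w u j|. In particular F is Lipschitz with constant γ < 1 with respect to the sup norm. -/
open Finset

/-- The SF-FSA-VI operator: `(F w) u j = 1` if `τ u j ∈ T`, and otherwise
`(F w) u j = max over (a, π) ∈ A × Π of ∑_{j'} ψ j a π j' * w (τ u j) j'`. -/
noncomputable def sfFsaVi {U E A P : Type*} [Fintype E] [Fintype A] [Fintype P]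
    [Nonempty A] [Nonempty P]
    (T : Set U) [DecidablePred (· ∈ T)] (τ : U → E → U)
    (ψ : E → A → P → E → ℝ) (w : U → E → ℝ) : U → E → ℝ :=
  fun u j =>
    if τ u j ∈ T then 1
    else Finset.univ.sup' Finset.univ_nonempty
      (fun p : A × P => ∑ j', ψ j p.1 p.2 j' * w (τ u j) j')

/-- The SF-FSA-VI operator `F` is a `γ`-contraction for the sup norm
`‖w‖∞ = max over (u, j) ∈ U × E of |w u j|`:
`‖F w − F w'‖∞ ≤ γ * ‖w − w'‖∞`. -/
theorem sfFsaVi_contraction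
    (U E A P : Type*) [Fintype U] [Fintype E] [Fintype A] [Fintype P]
    [Nonempty U] [Nonempty E] [Nonempty A] [Nonempty P]
    (T : Set U) [DecidablePred (· ∈ T)] (τ : U → E → U)
    (γ : ℝ) (hγ0 : 0 ≤ γ) (hγ1 : γ < 1)
    (ψ : E → A → P → E → ℝ)
    (hψnn : ∀ j a π j', 0 ≤ ψ j a π j')
    (hψl1 : ∀ j a π, ∑ j', |ψ j a π j'| ≤ γ)
    (w w' : U → E → ℝ) :
    Finset.univ.sup' Finset.univ_nonempty
        (fun p : U × E => |sfFsaVi T τ ψ w p.1 p.2 - sfFsaVi T τ ψ w' p.1 p.2|)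
      ≤ γ * Finset.univ.sup' Finset.univ_nonempty
        (fun p : U × E => |w p.1 p.2 - w' p.1 p.2|) := by
  set M := Finset.univ.sup' Finset.univ_nonempty
      (fun p : U × E => |w p.1 p.2 - w' p.1 p.2|) with hM
  have hM0 : 0 ≤ M := le_trans (abs_nonneg _)
    (Finset.le_sup' (fun p : U × E => |w p.1 p.2 - w' p.1 p.2|) (Finset.mem_univ (Classical.arbitrary _)))
  apply Finset.sup'_le
  intro p _
  obtain ⟨u, j⟩ := p
  simp only [sfFsaVi]
  by_cases hT : τ u j ∈ T
  · simp [hT]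
    positivity
  · simp only [hT, if_false]
    have key : ∀ q : A × P,
        |(∑ j', ψ j q.1 q.2 j' * w (τ u j) j') - ∑ j', ψ j q.1 q.2 j' * w' (τ u j) j'|
          ≤ γ * M := by
      intro q
      rw [← Finset.sum_sub_distrib]
      calc |∑ j', (ψ j q.1 q.2 j' * w (τ u j) j' - ψ j q.1 q.2 j' * w' (τ u j) j')|
          ≤ ∑ j', |ψ j q.1 q.2 j' * w (τ u j) j' - ψ j q.1 q.2 j' * w' (τ u j) j'| :=
            Finset.abs_sum_le_sum_abs _ _
        _ ≤ ∑ j' : E, ψ j q.1 q.2 j' * M := by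
            apply Finset.sum_le_sum
            intro j' _
            rw [← mul_sub, abs_mul, abs_of_nonneg (hψnn _ _ _ _)]
            exact mul_le_mul_of_nonneg_left
              (Finset.le_sup' (fun p : U × E => |w p.1 p.2 - w' p.1 p.2|)
                (Finset.mem_univ (τ u j, j'))) (hψnn _ _ _ _)
        _ = (∑ j' : E, ψ j q.1 q.2 j') * M := by rw [Finset.sum_mul]
        _ ≤ γ * M := by
            apply mul_le_mul_of_nonneg_right _ hM0
            calc (∑ j' : E, ψ j q.1 q.2 j') = ∑ j' : E, |ψ j q.1 q.2 j'| := by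
                  exact Finset.sum_congr rfl fun j' _ => (abs_of_nonneg (hψnn _ _ _ _)).symm
              _ ≤ γ := hψl1 _ _ _
    rw [abs_sub_le_iff]
    constructor
    · rw [sub_le_iff_le_add]
      apply Finset.sup'_le
      intro q _
      have h2 := Finset.le_sup' (fun q : A × P => ∑ j', ψ j q.1 q.2 j' * w' (τ u j) j')
          (Finset.mem_univ q)
      have := key q
      rw [abs_sub_le_iff] at this
      linarith [this.1]
    · rw [sub_le_iff_le_add]
      apply Finset.sup'_le
      intro q _
      have h2 := Finset.le_sup' (fun q : A × P => ∑ j', ψ j q.1 q.2 j' * w (τ u j) j')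
          (Finset.mem_univ q)
      have := key q
      rw [abs_sub_le_iff] at this
      linarith [this.2]
end

section
/- The unique fixed point w* of the SF-FSA-VI operator F takes values in [0, 1]: for every (u, j) ∈ U × E, 0 ≤ w* u j ≤ 1. More precisely, F maps the set {w : U → E → ℝ | 0 ≤ w u j ≤ 1 for all (u, j)} into itself, and the fixed point lies in this set. -/
open Finset

/-- `F` maps `{w | ∀ (u, j), 0 ≤ w u j ≤ 1}` into itself, and the
fixed point `w*` of `F` satisfies `0 ≤ w* u j ≤ 1` for every `(u, j)`. -/
theorem sfFsaVi_fixedPoint_mem_unitInterval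
    (U E A P : Type*) [Fintype U] [Fintype E] [Fintype A] [Fintype P]
    [Nonempty U] [Nonempty E] [Nonempty A] [Nonempty P]
    (T : Set U) [DecidablePred (· ∈ T)] (τ : U → E → U)
    (γ : ℝ) (hγ0 : 0 ≤ γ) (hγ1 : γ < 1)
    (ψ : E → A → P → E → ℝ)
    (hψnn : ∀ j a π j', 0 ≤ ψ j a π j')
    (hψl1 : ∀ j a π, ∑ j', |ψ j a π j'| ≤ γ)
    (wstar : U → E → ℝ) (hfix : sfFsaVi T τ ψ wstar = wstar) :
    (∀ w : U → E → ℝ, (∀ u j, 0 ≤ w u j ∧ w u j ≤ 1) →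
      ∀ u j, 0 ≤ sfFsaVi T τ ψ w u j ∧ sfFsaVi T τ ψ w u j ≤ 1) ∧
    (∀ u j, 0 ≤ wstar u j ∧ wstar u j ≤ 1) := by
  have hψsum : ∀ j a π, ∑ j', ψ j a π j' ≤ γ := by
    intro j a π
    have := hψl1 j a π
    calc ∑ j', ψ j a π j' = ∑ j', |ψ j a π j'| := by
          exact Finset.sum_congr rfl fun j' _ => (abs_of_nonneg (hψnn j a π j')).symm
      _ ≤ γ := this
  constructor
  · intro w hw u j
    unfold sfFsaVi
    split_ifs with ht
    · constructor <;> norm_num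
    · constructor
      · apply le_sup'_of_le _ (Finset.mem_univ (Classical.arbitrary (A × P)))
        exact Finset.sum_nonneg fun j' _ =>
          mul_nonneg (hψnn _ _ _ _) (hw _ _).1
      · apply Finset.sup'_le
        intro p _
        calc ∑ j', ψ j p.1 p.2 j' * w (τ u j) j'
            ≤ ∑ j', ψ j p.1 p.2 j' * 1 :=
              Finset.sum_le_sum fun j' _ =>
                mul_le_mul_of_nonneg_left (hw _ _).2 (hψnn _ _ _ _)
          _ = ∑ j', ψ j p.1 p.2 j' := by simp
          _ ≤ γ := hψsum _ _ _
          _ ≤ 1 := hγ1.le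
  · -- bounds on the fixed point
    set M : ℝ := Finset.univ.sup' Finset.univ_nonempty
      (fun p : U × E => wstar p.1 p.2) with hMdef
    set m : ℝ := Finset.univ.inf' Finset.univ_nonempty
      (fun p : U × E => wstar p.1 p.2) with hmdef
    have hM : ∀ u j, wstar u j ≤ M := fun u j =>
      Finset.le_sup' (fun p : U × E => wstar p.1 p.2) (Finset.mem_univ (u, j))
    have hm : ∀ u j, m ≤ wstar u j := fun u j =>
      Finset.inf'_le (fun p : U × E => wstar p.1 p.2) (Finset.mem_univ (u, j))
    -- upper bound: all values ≤ max 1 (γ * max M 0)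
    have hub : ∀ u j, wstar u j ≤ max 1 (γ * max M 0) := by
      intro u j
      conv_lhs => rw [← hfix]
      unfold sfFsaVi
      split_ifs with ht
      · exact le_max_left _ _
      · refine le_trans (Finset.sup'_le _ _ ?_) (le_max_right _ _)
        intro p _
        calc ∑ j', ψ j p.1 p.2 j' * wstar (τ u j) j'
            ≤ ∑ j', ψ j p.1 p.2 j' * max M 0 :=
              Finset.sum_le_sum fun j' _ =>
                mul_le_mul_of_nonneg_left (le_trans (hM _ _) (le_max_left _ _)) (hψnn _ _ _ _)
          _ = (∑ j', ψ j p.1 p.2 j') * max M 0 := by rw [Finset.sum_mul]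
          _ ≤ γ * max M 0 :=
              mul_le_mul_of_nonneg_right (hψsum _ _ _) (le_max_right _ _)
    have hMle : M ≤ max 1 (γ * max M 0) :=
      Finset.sup'_le _ _ fun p _ => hub p.1 p.2
    have hM1 : M ≤ 1 := by
      by_contra h
      push_neg at h
      have hMpos : 0 < M := lt_trans one_pos h
      rw [max_eq_left hMpos.le] at hMle
      have hγM : γ * M < M := by
        nlinarith
      have : M ≤ γ * M := by
        rcases max_cases 1 (γ * M) with ⟨he, _⟩ | ⟨he, _⟩
        · rw [he] at hMle; linarith
        · rwa [he] at hMle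
      linarith
    -- lower bound
    have hlb : ∀ u j, min 1 (γ * min m 0) ≤ wstar u j := by
      intro u j
      conv_rhs => rw [← hfix]
      unfold sfFsaVi
      split_ifs with ht
      · exact min_le_left _ _
      · refine le_trans (min_le_right _ _) ?_
        refine le_trans ?_ (Finset.le_sup' _ (Finset.mem_univ (Classical.arbitrary (A × P))))
        set p := Classical.arbitrary (A × P)
        calc γ * min m 0
            ≤ (∑ j', ψ j p.1 p.2 j') * min m 0 :=
              mul_le_mul_of_nonpos_right (hψsum _ _ _) (min_le_right _ _)
          _ = ∑ j', ψ j p.1 p.2 j' * min m 0 := by rw [Finset.sum_mul]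
          _ ≤ ∑ j', ψ j p.1 p.2 j' * wstar (τ u j) j' :=
              Finset.sum_le_sum fun j' _ =>
                mul_le_mul_of_nonneg_left (le_trans (min_le_left _ _) (hm _ _)) (hψnn _ _ _ _)
    have hmle : min 1 (γ * min m 0) ≤ m :=
      Finset.le_inf' _ _ fun p _ => hlb p.1 p.2
    have hm0 : 0 ≤ m := by
      by_contra h
      push_neg at h
      rw [min_eq_left h.le] at hmle
      have hγm : m < γ * m := by nlinarith
      have : γ * m ≤ m := by
        rcases min_cases 1 (γ * m) with ⟨he, _⟩ | ⟨he, _⟩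
        · rw [he] at hmle; nlinarith
        · rwa [he] at hmle
      linarith
    exact fun u j => ⟨le_trans hm0 (hm u j), le_trans (hM u j) hM1⟩
end
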